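/- Structure-equation identity: Let m₁ ∈ {−2, 1}, let U ⊆ ℝ² be open and let u : U → ℝ have continuous derivatives u_x, u_t, u_{xx}, u_{xt}, u_{xxx}, u_{xxt}. Define f₁₁ = u − u_{xx} and f₁₂ = 2u(u − u_{xx}) + (4/m₁) u u_x − 2u_x² − 2u². Then the pointwise identity ∂ₜ f₁₁ − ∂ₓ f₁₂ − m₁ f₁₂ = u_t − u_{txx} − 4uu_x − 2u_x² − 2uu_{xx} + 6u_xu_{xx} + 2uu_{xxx} holds on U. In particular, u solves the equation u_t − u_{txx} = 4uu_x + 2u_x² + 2uu_{xx} − 6u_xu_{xx} − 2uu_{xxx} on U if and only if ∂ₜ f₁₁ = ∂ₓ f₁₂ + m₁ f₁₂ on U. -/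

import Mathlib

noncomputable section

/-- Partial derivative in the first (spatial) variable. -/
def pdx (f : ℝ → ℝ → ℝ) : ℝ → ℝ → ℝ := fun x t => deriv (fun y => f y t) x

/-- Partial derivative in the second (time) variable. -/
def pdt (f : ℝ → ℝ → ℝ) : ℝ → ℝ → ℝ := fun x t => deriv (fun τ => f x τ) t

/-- Coefficient `f₁₁ = u - u_{xx}` of the one-form `ω₁`. -/
def F11 (u : ℝ → ℝ → ℝ) : ℝ → ℝ → ℝ := fun x t => u x t - pdx (pdx u) x t

/-- Coefficient `f₁₂ = 2u(u - u_{xx}) + (4/m₁)uu_x - 2u_x² - 2u²` of the one-form `ω₁`. -/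
def F12 (m₁ : ℝ) (u : ℝ → ℝ → ℝ) : ℝ → ℝ → ℝ := fun x t =>
  2 * u x t * (u x t - pdx (pdx u) x t) + (4 / m₁) * u x t * pdx u x t
    - 2 * (pdx u x t) ^ 2 - 2 * (u x t) ^ 2

end

/-! By the product rule in `x` and linearity of `∂ₜ`,
`∂ₓf₁₂ + m₁f₁₂ = 4uu_x - 6u_xu_xx - 2uu_xxx + (4/m₁ - 2m₁)(u_x² + uu_xx)`, and the admissible
values `m₁ ∈ {-2, 1}` are precisely the roots of `m² + m - 2`, i.e. those with `4/m₁ - 2m₁ = 2`. -/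

section

variable {u : ℝ → ℝ → ℝ} {x t : ℝ}

theorem pdt_F11 (hu : DifferentiableAt ℝ (fun τ => u x τ) t)
    (huxx : DifferentiableAt ℝ (fun τ => pdx (pdx u) x τ) t) :
    pdt (F11 u) x t = pdt u x t - pdt (pdx (pdx u)) x t :=
  (hu.hasDerivAt.sub huxx.hasDerivAt).deriv

theorem pdx_F12 (m : ℝ) (hu : DifferentiableAt ℝ (fun y => u y t) x)
    (hux : DifferentiableAt ℝ (fun y => pdx u y t) x)
    (huxx : DifferentiableAt ℝ (fun y => pdx (pdx u) y t) x) :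
    pdx (F12 m u) x t =
      4 / m * (pdx u x t ^ 2 + u x t * pdx (pdx u) x t)
        - 6 * pdx u x t * pdx (pdx u) x t - 2 * u x t * pdx (pdx (pdx u)) x t := by
  have hA : HasDerivAt (fun y => u y t) (pdx u x t) x := hu.hasDerivAt
  have hB : HasDerivAt (fun y => pdx u y t) (pdx (pdx u) x t) x := hux.hasDerivAt
  have hC : HasDerivAt (fun y => pdx (pdx u) y t) (pdx (pdx (pdx u)) x t) x := huxx.hasDerivAt
  have hF := (((hA.const_mul 2).mul (hA.sub hC)).add ((hA.const_mul (4 / m)).mul hB)).sub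
    ((hB.pow 2).const_mul 2) |>.sub ((hA.pow 2).const_mul 2)
  refine hF.deriv.trans ?_
  norm_num
  ring

theorem four_div_sub_two_mul_eq_two {m : ℝ} (hm : m = -2 ∨ m = 1) : 4 / m - 2 * m = 2 := by
  rcases hm with rfl | rfl <;> norm_num

theorem pdt_F11_sub_pdx_F12_sub_mul_F12 {m : ℝ} (hm : m = -2 ∨ m = 1)
    (hu : DifferentiableAt ℝ (fun y => u y t) x)
    (hux : DifferentiableAt ℝ (fun y => pdx u y t) x)
    (huxx : DifferentiableAt ℝ (fun y => pdx (pdx u) y t) x)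
    (hut : DifferentiableAt ℝ (fun τ => u x τ) t)
    (huxxt : DifferentiableAt ℝ (fun τ => pdx (pdx u) x τ) t) :
    pdt (F11 u) x t - pdx (F12 m u) x t - m * F12 m u x t =
      pdt u x t - pdt (pdx (pdx u)) x t - 4 * u x t * pdx u x t
        - 2 * (pdx u x t) ^ 2 - 2 * u x t * pdx (pdx u) x t
        + 6 * pdx u x t * pdx (pdx u) x t + 2 * u x t * pdx (pdx (pdx u)) x t := by
  have hm0 : m ≠ 0 := by rcases hm with rfl | rfl <;> norm_num
  rw [pdt_F11 hut huxxt, pdx_F12 m hu hux huxx, F12]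
  linear_combination
    -(pdx u x t ^ 2 + u x t * pdx (pdx u) x t) * four_div_sub_two_mul_eq_two hm
      - u x t * pdx u x t * mul_div_cancel₀ 4 hm0

end

theorem structure_equation_identity_general
    (m₁ : ℝ) (hm₁ : m₁ = -2 ∨ m₁ = 1)
    (U : Set (ℝ × ℝ)) (u : ℝ → ℝ → ℝ)
    -- existence of the partial derivatives on U
    (hdx : ∀ p ∈ U, DifferentiableAt ℝ (fun y => u y p.2) p.1)
    (hdxx : ∀ p ∈ U, DifferentiableAt ℝ (fun y => pdx u y p.2) p.1)
    (hdxxx : ∀ p ∈ U, DifferentiableAt ℝ (fun y => pdx (pdx u) y p.2) p.1)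
    (hdt : ∀ p ∈ U, DifferentiableAt ℝ (fun τ => u p.1 τ) p.2)
    (hdxxt : ∀ p ∈ U, DifferentiableAt ℝ (fun τ => pdx (pdx u) p.1 τ) p.2) :
    (∀ p ∈ U,
      pdt (F11 u) p.1 p.2 - pdx (F12 m₁ u) p.1 p.2 - m₁ * F12 m₁ u p.1 p.2 =
        pdt u p.1 p.2 - pdt (pdx (pdx u)) p.1 p.2 - 4 * u p.1 p.2 * pdx u p.1 p.2
          - 2 * (pdx u p.1 p.2) ^ 2 - 2 * u p.1 p.2 * pdx (pdx u) p.1 p.2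
          + 6 * pdx u p.1 p.2 * pdx (pdx u) p.1 p.2
          + 2 * u p.1 p.2 * pdx (pdx (pdx u)) p.1 p.2) ∧
    ((∀ p ∈ U,
        pdt u p.1 p.2 - pdt (pdx (pdx u)) p.1 p.2 =
          4 * u p.1 p.2 * pdx u p.1 p.2 + 2 * (pdx u p.1 p.2) ^ 2
            + 2 * u p.1 p.2 * pdx (pdx u) p.1 p.2
            - 6 * pdx u p.1 p.2 * pdx (pdx u) p.1 p.2
            - 2 * u p.1 p.2 * pdx (pdx (pdx u)) p.1 p.2) ↔
      (∀ p ∈ U,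
        pdt (F11 u) p.1 p.2 = pdx (F12 m₁ u) p.1 p.2 + m₁ * F12 m₁ u p.1 p.2)) := by
  have identity := fun p (hp : p ∈ U) => pdt_F11_sub_pdx_F12_sub_mul_F12 hm₁
    (hdx p hp) (hdxx p hp) (hdxxx p hp) (hdt p hp) (hdxxt p hp)
  refine ⟨identity, forall₂_congr fun p hp => ?_⟩
  constructor <;> intro h <;> linarith [identity p hp]

/-- **Structure-equation identity.**
Let `m₁ ∈ {-2,1}`, `U ⊆ ℝ²` open, `u : U → ℝ` with continuous derivatives
`u_x, u_t, u_xx, u_xt, u_xxx, u_xxt`. With `f₁₁ = u - u_{xx}` and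
`f₁₂ = 2u(u-u_{xx}) + (4/m₁)uu_x - 2u_x² - 2u²` one has, pointwise on `U`,
`∂ₜf₁₁ - ∂ₓf₁₂ - m₁f₁₂ = u_t - u_{txx} - 4uu_x - 2u_x² - 2uu_{xx} + 6u_xu_{xx} + 2uu_{xxx}`.
In particular `u` solves the Novikov-type equation on `U` iff `∂ₜf₁₁ = ∂ₓf₁₂ + m₁f₁₂` on `U`. -/
theorem structure_equation_identity
    (m₁ : ℝ) (hm₁ : m₁ = -2 ∨ m₁ = 1)
    (U : Set (ℝ × ℝ)) (hU : IsOpen U) (u : ℝ → ℝ → ℝ)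
    -- existence of the partial derivatives on U
    (hdx : ∀ p ∈ U, DifferentiableAt ℝ (fun y => u y p.2) p.1)
    (hdxx : ∀ p ∈ U, DifferentiableAt ℝ (fun y => pdx u y p.2) p.1)
    (hdxxx : ∀ p ∈ U, DifferentiableAt ℝ (fun y => pdx (pdx u) y p.2) p.1)
    (hdt : ∀ p ∈ U, DifferentiableAt ℝ (fun τ => u p.1 τ) p.2)
    (hdxxt : ∀ p ∈ U, DifferentiableAt ℝ (fun τ => pdx (pdx u) p.1 τ) p.2)
    -- continuity of u_x, u_t, u_xx, u_xt, u_xxx, u_xxt on U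
    (hc1 : ContinuousOn (fun p : ℝ × ℝ => pdx u p.1 p.2) U)
    (hc2 : ContinuousOn (fun p : ℝ × ℝ => pdt u p.1 p.2) U)
    (hc3 : ContinuousOn (fun p : ℝ × ℝ => pdx (pdx u) p.1 p.2) U)
    (hc4 : ContinuousOn (fun p : ℝ × ℝ => pdt (pdx u) p.1 p.2) U)
    (hc5 : ContinuousOn (fun p : ℝ × ℝ => pdx (pdx (pdx u)) p.1 p.2) U)
    (hc6 : ContinuousOn (fun p : ℝ × ℝ => pdt (pdx (pdx u)) p.1 p.2) U) :
    (∀ p ∈ U,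
      pdt (F11 u) p.1 p.2 - pdx (F12 m₁ u) p.1 p.2 - m₁ * F12 m₁ u p.1 p.2 =
        pdt u p.1 p.2 - pdt (pdx (pdx u)) p.1 p.2 - 4 * u p.1 p.2 * pdx u p.1 p.2
          - 2 * (pdx u p.1 p.2) ^ 2 - 2 * u p.1 p.2 * pdx (pdx u) p.1 p.2
          + 6 * pdx u p.1 p.2 * pdx (pdx u) p.1 p.2
          + 2 * u p.1 p.2 * pdx (pdx (pdx u)) p.1 p.2) ∧
    ((∀ p ∈ U,
        pdt u p.1 p.2 - pdt (pdx (pdx u)) p.1 p.2 =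
          4 * u p.1 p.2 * pdx u p.1 p.2 + 2 * (pdx u p.1 p.2) ^ 2
            + 2 * u p.1 p.2 * pdx (pdx u) p.1 p.2
            - 6 * pdx u p.1 p.2 * pdx (pdx u) p.1 p.2
            - 2 * u p.1 p.2 * pdx (pdx (pdx u)) p.1 p.2) ↔
      (∀ p ∈ U,
        pdt (F11 u) p.1 p.2 = pdx (F12 m₁ u) p.1 p.2 + m₁ * F12 m₁ u p.1 p.2)) :=
  structure_equation_identity_general m₁ hm₁ U u hdx hdxx hdxxx hdt hdxxt
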